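/- For every partial multivalued function R on Baire space with Σ_2^∞LLPO ≤ᶜ_W R ∐ LLPO_{2,1}, there exists a partial multivalued function S with Σ_2^∞LLPO ≤ᶜ_W S ∐ LLPO_{2,1} and R ≰ᶜ_W S. In other words, the set {R | Σ_2^∞LLPO ≤ᶜ_W R ∐ LLPO_{2,1}} has no ≤ᶜ_W-least element; consequently the continuous Weihrauch lattice is not a Brouwer algebra. -/
import Mathlib


namespace Weihrauch

/-- Baire space ℕ^ℕ. -/
abbrev Baire : Type := ℕ → ℕ

/-- The interleaving pairing homeomorphism ⟨p,q⟩. -/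
def pair (p q : Baire) : Baire := fun n => if n % 2 = 0 then p (n / 2) else q (n / 2)

/-- First component of the interleaving pairing. -/
def left (z : Baire) : Baire := fun n => z (2 * n)

/-- Second component of the interleaving pairing. -/
def right (z : Baire) : Baire := fun n => z (2 * n + 1)

/-- The sequence np = n,p(0),p(1),… . -/
def cons (n : ℕ) (p : Baire) : Baire := fun m => match m with
  | 0 => n
  | k + 1 => p k

/-- Drop the first entry of a sequence. -/
def tail (z : Baire) : Baire := fun n => z (n + 1)

/-- The constant zero sequence 0^ℕ. -/
def zero : Baire := fun _ => 0

/-- The constant one sequence 1^ℕ. -/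
def one : Baire := fun _ => 1

/-- Partial multivalued functions on Baire space. -/
abbrev MV : Type := Baire → Set Baire

/-- The domain of a partial multivalued function. -/
def dom (P : MV) : Set Baire := {x | (P x).Nonempty}

/-- Continuous Weihrauch reducibility P ≤ᶜ_W Q. -/
def CWle (P Q : MV) : Prop :=
  ∃ H K : Baire → Baire,
    ContinuousOn K (dom P) ∧
    (∀ x ∈ dom P, K x ∈ dom Q) ∧
    ContinuousOn H {z | ∃ x ∈ dom P, ∃ y ∈ Q (K x), z = pair x y} ∧
    (∀ x ∈ dom P, ∀ y ∈ Q (K x), H (pair x y) ∈ P x)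

/-- Continuous Weihrauch equivalence P ≡ᶜ_W Q. -/
def CWequiv (P Q : MV) : Prop := CWle P Q ∧ CWle Q P

/-- The infimum operation (P ⊕ Q)(⟨p,q⟩) = 0P(p) ∪ 1Q(q) for p ∈ dom P, q ∈ dom Q. -/
def oplus (P Q : MV) : MV := fun z =>
  {r | left z ∈ dom P ∧ right z ∈ dom Q ∧
       ((∃ s ∈ P (left z), r = cons 0 s) ∨ (∃ s ∈ Q (right z), r = cons 1 s))}

/-- The coproduct (P ∐ Q)(0p) = 0P(p), (P ∐ Q)(1p) = 1Q(p). -/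
def coprod (P Q : MV) : MV := fun z =>
  {r | (z 0 = 0 ∧ ∃ s ∈ P (tail z), r = cons 0 s) ∨
       (z 0 = 1 ∧ ∃ s ∈ Q (tail z), r = cons 1 s)}

/-- The product (P × Q)(⟨p,q⟩) = {⟨r,s⟩ | r ∈ P(p), s ∈ Q(q)}. -/
def prod (P Q : MV) : MV := fun z =>
  {r | ∃ s ∈ P (left z), ∃ t ∈ Q (right z), r = pair s t}

/-- A fixed finite tupling ⟨p₀,…,p_{n-1}⟩ of n sequences, by interleaving. -/
def ftup (n : ℕ) (f : ℕ → Baire) : Baire := fun m => f (m % n) (m / n)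

/-- The i-th projection inverting `ftup n`: `fproj n i (ftup n f) = f i` for i < n. -/
def fproj (n i : ℕ) (z : Baire) : Baire := fun j => z (j * n + i)

/-- The finite parallelization P*, with P*(n⟨p₁,…,pₙ⟩) = {n⟨r₁,…,rₙ⟩ | rᵢ ∈ P(pᵢ)}
for n ≥ 1 and P*(0p) = {0^ℕ}.  (Note every sequence is of the form `ftup n f`,
since `ftup n (fun i => fproj n i z) = z`.) -/
def fpar (P : MV) : MV := fun z =>
  {r | (z 0 = 0 ∧ r = zero) ∨
       (1 ≤ z 0 ∧ r 0 = z 0 ∧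
        ∀ i < z 0, fproj (z 0) i (tail r) ∈ P (fproj (z 0) i (tail z)))}

/-- Countable tupling ⟨p₁,p₂,…⟩ via the pairing bijection ℕ×ℕ→ℕ
(the family is indexed by 0,1,2,…). -/
def ctup (f : ℕ → Baire) : Baire := fun m => f (Nat.unpair m).1 (Nat.unpair m).2

/-- Projection inverting `ctup`: `cproj i (ctup f) = f i`. -/
def cproj (i : ℕ) (z : Baire) : Baire := fun j => z (Nat.pair i j)

/-- The 1-indexed component pᵢ of a countable tuple z = ⟨p₁,p₂,…⟩ (for i ≥ 1). -/
def comp (z : Baire) (i : ℕ) : Baire := cproj (i - 1) z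

/-- LLPO_{n,1}: at most one pair (i,j) with pᵢ(j) ≠ 0 in the domain;
values are the i0^ℕ with 1 ≤ i ≤ n and pᵢ = 0^ℕ. -/
def LLPOn (n : ℕ) : MV := fun z =>
  {r | (∀ i j i' j', 1 ≤ i → 1 ≤ i' → comp z i j ≠ 0 → comp z i' j' ≠ 0 →
          (i = i' ∧ j = j')) ∧
       ∃ i, 1 ≤ i ∧ i ≤ n ∧ comp z i = zero ∧ r = cons i zero}

/-- LLPO_{∞,m}: at most m pairs (i,j) with pᵢ(j) ≠ 0 in the domain;
values are the i0^ℕ with pᵢ = 0^ℕ. -/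
def LLPOinf (m : ℕ) : MV := fun z =>
  {r | (∃ s : Finset (ℕ × ℕ), s.card ≤ m ∧ ∀ i j, 1 ≤ i → comp z i j ≠ 0 → (i, j) ∈ s) ∧
       ∃ i, 1 ≤ i ∧ comp z i = zero ∧ r = cons i zero}

/-- The sequence 0ⁿ10^ℕ. -/
def zeros1 (n : ℕ) : Baire := fun m => if m = n then 1 else 0

/-- Σ_k^∞LLPO(⟨0^ℕ,p⟩) = LLPO_{∞,2}(p), Σ_k^∞LLPO(⟨0ⁿ10^ℕ,p⟩) = LLPO_{n,1}(p) for n ≥ k. -/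
def SigmaLLPO (k : ℕ) : MV := fun z =>
  {r | (left z = zero ∧ r ∈ LLPOinf 2 (right z)) ∨
       (∃ n, k ≤ n ∧ left z = zeros1 n ∧ r ∈ LLPOn n (right z))}

/-- c_𝒜, with dom(c_𝒜) = {0^ℕ} and c_𝒜(0^ℕ) = 𝒜. -/
def cA (A : Set Baire) : MV := fun z => {r | z = zero ∧ r ∈ A}

/-- d_𝒜, with dom(d_𝒜) = 𝒜 and d_𝒜(x) = {1^ℕ} for x ∈ 𝒜. -/
def dA (A : Set Baire) : MV := fun z => {r | z ∈ A ∧ r = one}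

/-- Continuous Medvedev reducibility 𝒜 ≤ᶜ_M 𝒝. -/
def CMle (A B : Set Baire) : Prop :=
  ∃ H : Baire → Baire, ContinuousOn H B ∧ ∀ x ∈ B, H x ∈ A

/-- The Medvedev sum 𝒜 + 𝒝 = 0𝒜 ∪ 1𝒝. -/
def msum (A B : Set Baire) : Set Baire := (cons 0 '' A) ∪ (cons 1 '' B)

/-- The Medvedev product 𝒜 × 𝒝 = {⟨p,q⟩ | p ∈ 𝒜, q ∈ 𝒝}. -/
def mprod (A B : Set Baire) : Set Baire := {z | ∃ p ∈ A, ∃ q ∈ B, z = pair p q}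

end Weihrauch

namespace Weihrauch

theorem left_pair (p q : Baire) : left (pair p q) = p := by
  funext n
  simp [left, pair, Nat.mul_div_cancel_left, Nat.mul_mod_right]

theorem right_pair (p q : Baire) : right (pair p q) = q := by
  funext n
  have h1 : (2 * n + 1) % 2 = 1 := by omega
  have h2 : (2 * n + 1) / 2 = n := by omega
  simp [right, pair, h1, h2]

theorem pair_left_right (z : Baire) : pair (left z) (right z) = z := by
  funext n
  rcases Nat.even_or_odd n with ⟨k, hk⟩ | ⟨k, hk⟩
  · have h1 : n % 2 = 0 := by omega
    have h2 : n / 2 = k := by omega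
    simp [pair, left, h1, h2]; congr 1; omega
  · have h1 : n % 2 = 1 := by omega
    have h2 : n / 2 = k := by omega
    simp [pair, right, h1, h2]; congr 1; omega

theorem tail_cons (n : ℕ) (p : Baire) : tail (cons n p) = p := rfl

theorem comp_def (z : Baire) (i j : ℕ) : comp z i j = z (Nat.pair (i - 1) j) := rfl

theorem comp_zero (i : ℕ) : comp zero i = zero := rfl

theorem zero_ne_zeros1 (n : ℕ) : zero ≠ zeros1 n := by
  intro h
  have := congrFun h n
  simp [zero, zeros1] at this

theorem zeros1_inj {a b : ℕ} (h : zeros1 a = zeros1 b) : a = b := by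
  have := congrFun h a
  simp [zeros1] at this
  by_contra hne
  simp [hne] at this

theorem pair_zero_zero : pair zero zero = zero := by
  funext n; simp [pair, zero]

theorem left_zero : left zero = zero := rfl
theorem right_zero : right zero = zero := rfl

-- continuity helpers
theorem continuous_left : Continuous left :=
  continuous_pi fun n => continuous_apply (2 * n)
theorem continuous_right : Continuous right :=
  continuous_pi fun n => continuous_apply (2 * n + 1)
theorem continuous_tail : Continuous tail :=
  continuous_pi fun n => continuous_apply (n + 1)

theorem continuous_cons_comp (k : ℕ) {f : Baire → Baire} (hf : Continuous f) :
    Continuous fun z => cons k (f z) := by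
  apply continuous_pi
  intro i
  match i with
  | 0 => exact continuous_const
  | j + 1 => exact (continuous_apply j).comp hf

theorem continuous_pair_comp {f g : Baire → Baire} (hf : Continuous f) (hg : Continuous g) :
    Continuous fun z => pair (f z) (g z) := by
  apply continuous_pi
  intro n
  by_cases h : n % 2 = 0
  · simp only [pair, h, if_true]
    exact (continuous_apply (n / 2)).comp hf
  · simp only [pair, h, if_false]
    exact (continuous_apply (n / 2)).comp hg

/-- Local determination: a function continuous within `s` at `z` is determined, at
each output coordinate, by a finite prefix of the input (among inputs in `s`). -/
theorem loc_det {F : Baire → Baire} {s : Set Baire} {z : Baire}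
    (hF : ContinuousWithinAt F s z) (i : ℕ) :
    ∃ L, ∀ w ∈ s, (∀ j, j < L → w j = z j) → F w i = F z i := by
  have hopen : IsOpen {v : Baire | v i = F z i} := by
    have : {v : Baire | v i = F z i} = (fun v : Baire => v i) ⁻¹' {F z i} := rfl
    rw [this]
    exact (continuous_apply i).isOpen_preimage _ (isOpen_discrete _)
  have hmem : {v : Baire | v i = F z i} ∈ nhds (F z) := hopen.mem_nhds rfl
  have hpre : F ⁻¹' {v : Baire | v i = F z i} ∈ nhdsWithin z s := hF hmem
  rw [mem_nhdsWithin] at hpre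
  obtain ⟨U, hUopen, hzU, hUsub⟩ := hpre
  rw [isOpen_pi_iff] at hUopen
  obtain ⟨I, u, hIu, hsub⟩ := hUopen z hzU
  refine ⟨I.sup id + 1, fun w hw hagree => ?_⟩
  have hwU : w ∈ U := by
    apply hsub
    intro a ha
    have : w a = z a := hagree a (by
      have := Finset.le_sup (f := id) ha
      simp at this; omega)
    rw [this]
    exact (hIu a ha).2
  exact hUsub ⟨hwU, hw⟩

theorem loc_det_prefix {F : Baire → Baire} {s : Set Baire} {z : Baire}
    (hF : ContinuousWithinAt F s z) (P : ℕ) :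
    ∃ L, ∀ w ∈ s, (∀ j, j < L → w j = z j) → ∀ j, j < P → F w j = F z j := by
  induction P with
  | zero => exact ⟨0, fun w _ _ j hj => absurd hj (by omega)⟩
  | succ P ih =>
    obtain ⟨L1, hL1⟩ := ih
    obtain ⟨L2, hL2⟩ := loc_det hF P
    refine ⟨max L1 L2, fun w hw hagree j hj => ?_⟩
    rcases Nat.lt_or_ge j P with h | h
    · exact hL1 w hw (fun j hj => hagree j (lt_of_lt_of_le hj (le_max_left _ _))) j h
    · have : j = P := by omega
      subst this
      exact hL2 w hw (fun j hj => hagree j (lt_of_lt_of_le hj (le_max_right _ _)))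

theorem finset_exists_notMem {s t : Finset ℕ} (h : s.card < t.card) :
    ∃ e ∈ t, e ∉ s := by
  by_contra hc
  push_neg at hc
  exact absurd (Finset.card_le_card fun x hx => hc x hx) (by omega)


/-- At most one nonzero entry. -/
def AMO (z : Baire) : Prop :=
  ∀ i j i' j', 1 ≤ i → 1 ≤ i' → comp z i j ≠ 0 → comp z i' j' ≠ 0 → (i = i' ∧ j = j')

theorem mem_LLPOn_iff {n : ℕ} {z r : Baire} :
    r ∈ LLPOn n z ↔ AMO z ∧ ∃ i, 1 ≤ i ∧ i ≤ n ∧ comp z i = zero ∧ r = cons i zero :=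
  Iff.rfl

theorem comp_eq_zero_iff {z : Baire} {i : ℕ} : comp z i = zero ↔ ∀ j, comp z i j = 0 :=
  ⟨fun h j => by rw [h]; rfl, fun h => funext h⟩

theorem AMO_zero : AMO zero := by
  intro i j i' j' _ _ h _
  exact absurd rfl h

theorem mem_LLPOn {n i : ℕ} {z : Baire} (hA : AMO z) (h1 : 1 ≤ i) (hn : i ≤ n)
    (hz : comp z i = zero) : cons i zero ∈ LLPOn n z :=
  ⟨hA, i, h1, hn, hz, rfl⟩

theorem dom_LLPOn {n i : ℕ} {z : Baire} (hA : AMO z) (h1 : 1 ≤ i) (hn : i ≤ n)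
    (hz : comp z i = zero) : z ∈ dom (LLPOn n) :=
  ⟨cons i zero, mem_LLPOn hA h1 hn hz⟩

theorem dom_LLPOn_amo {n : ℕ} {z : Baire} (h : z ∈ dom (LLPOn n)) : AMO z := by
  obtain ⟨r, hr, _⟩ := h
  exact hr

theorem dom_coprod {P Q : MV} {w : Baire} (h : w ∈ dom (coprod P Q)) :
    (w 0 = 0 ∧ tail w ∈ dom P) ∨ (w 0 = 1 ∧ tail w ∈ dom Q) := by
  obtain ⟨r, hr⟩ := h
  rcases hr with ⟨h0, s, hs, _⟩ | ⟨h0, s, hs, _⟩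
  · exact Or.inl ⟨h0, s, hs⟩
  · exact Or.inr ⟨h0, s, hs⟩

theorem mem_coprod_zero {P Q : MV} {w r : Baire} (h0 : w 0 = 0) (h : r ∈ coprod P Q w) :
    ∃ s ∈ P (tail w), r = cons 0 s := by
  rcases h with ⟨_, s, hs, he⟩ | ⟨h1, _⟩
  · exact ⟨s, hs, he⟩
  · omega

theorem mem_coprod_one {P Q : MV} {w r : Baire} (h0 : w 0 = 1) (h : r ∈ coprod P Q w) :
    ∃ s ∈ Q (tail w), r = cons 1 s := by
  rcases h with ⟨h1, _⟩ | ⟨_, s, hs, he⟩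
  · omega
  · exact ⟨s, hs, he⟩

theorem coprod_mem_zero {P Q : MV} {w s : Baire} (h0 : w 0 = 0) (hs : s ∈ P (tail w)) :
    cons 0 s ∈ coprod P Q w :=
  Or.inl ⟨h0, s, hs, rfl⟩

theorem coprod_mem_one {P Q : MV} {w s : Baire} (h0 : w 0 = 1) (hs : s ∈ Q (tail w)) :
    cons 1 s ∈ coprod P Q w :=
  Or.inr ⟨h0, s, hs, rfl⟩

theorem sigma_branch {k : ℕ} {w : Baire} (h : w ∈ dom (SigmaLLPO k)) :
    left w = zero ∨ ∃ m, k ≤ m ∧ left w = zeros1 m := by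
  obtain ⟨r, hr⟩ := h
  rcases hr with ⟨hl, _⟩ | ⟨m, hk, hl, _⟩
  · exact Or.inl hl
  · exact Or.inr ⟨m, hk, hl⟩

theorem sigma_cover {k : ℕ} {w : Baire} (h : w ∈ dom (SigmaLLPO k)) :
    ∃ s : Finset (ℕ × ℕ), s.card ≤ 2 ∧
      ∀ c d, 1 ≤ c → comp (right w) c d ≠ 0 → (c, d) ∈ s := by
  obtain ⟨r, hr⟩ := h
  rcases hr with ⟨_, ⟨s, hcard, hcov⟩, _⟩ | ⟨m, _, _, hA, _⟩
  · exact ⟨s, hcard, hcov⟩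
  · by_cases hz : ∀ c d, 1 ≤ c → comp (right w) c d = 0
    · exact ⟨∅, by simp, fun c d h1 hne => absurd (hz c d h1) hne⟩
    · push_neg at hz
      obtain ⟨c, d, h1, hne⟩ := hz
      refine ⟨{(c, d)}, by simp, fun c' d' h1' hne' => ?_⟩
      have := hA c' d' c d h1' h1 hne' hne
      simp [this.1, this.2]

theorem sigma_amo_fin {k m : ℕ} {w : Baire} (h : w ∈ dom (SigmaLLPO k))
    (hl : left w = zeros1 m) : AMO (right w) := by
  obtain ⟨r, hr⟩ := h
  rcases hr with ⟨hl', _⟩ | ⟨m', _, hl', ⟨hA, _⟩⟩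
  · rw [hl] at hl'; exact absurd hl'.symm (zero_ne_zeros1 m)
  · exact hA

theorem sigma_answer_inf {k k' : ℕ} {w : Baire} (h : w ∈ dom (SigmaLLPO k))
    (hl : left w = zero) (h1 : 1 ≤ k') (hz : comp (right w) k' = zero) :
    cons k' zero ∈ SigmaLLPO k w := by
  obtain ⟨r, hr⟩ := h
  rcases hr with ⟨_, ⟨cov, _⟩⟩ | ⟨m, _, hl', _⟩
  · exact Or.inl ⟨hl, cov, k', h1, hz, rfl⟩
  · rw [hl] at hl'; exact absurd hl' (zero_ne_zeros1 m)

theorem sigma_answer_fin {k k' m : ℕ} {w : Baire} (h : w ∈ dom (SigmaLLPO k))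
    (hl : left w = zeros1 m) (h1 : 1 ≤ k') (hm : k' ≤ m) (hz : comp (right w) k' = zero) :
    cons k' zero ∈ SigmaLLPO k w := by
  obtain ⟨r, hr⟩ := h
  rcases hr with ⟨hl', _⟩ | ⟨m', hk, hl', ⟨hA, _⟩⟩
  · rw [hl] at hl'; exact absurd hl'.symm (zero_ne_zeros1 m)
  · have hmm : m' = m := zeros1_inj (by rw [hl] at hl'; exact hl'.symm)
    subst hmm
    exact Or.inr ⟨m', hk, hl', hA, k', h1, hm, hz, rfl⟩

theorem sigma_mem_inf {k : ℕ} {w r : Baire} (hl : left w = zero) (h : r ∈ SigmaLLPO k w) :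
    ∃ i, 1 ≤ i ∧ comp (right w) i = zero ∧ r = cons i zero := by
  rcases h with ⟨_, _, i, h1, hz, he⟩ | ⟨m, _, hl', _⟩
  · exact ⟨i, h1, hz, he⟩
  · rw [hl] at hl'; exact absurd hl' (zero_ne_zeros1 m)

theorem sigma_mem_fin {k m : ℕ} {w r : Baire} (hl : left w = zeros1 m) (h : r ∈ SigmaLLPO k w) :
    ∃ i, 1 ≤ i ∧ i ≤ m ∧ comp (right w) i = zero ∧ r = cons i zero := by
  rcases h with ⟨hl', _⟩ | ⟨m', _, hl', _, i, h1, hm, hz, he⟩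
  · rw [hl] at hl'; exact absurd hl'.symm (zero_ne_zeros1 m)
  · have hmm : m' = m := zeros1_inj (by rw [hl] at hl'; exact hl'.symm)
    subst hmm
    exact ⟨i, h1, hm, hz, he⟩


theorem continuousOn_pair_comp {f g : Baire → Baire} {s : Set Baire}
    (hf : ContinuousOn f s) (hg : ContinuousOn g s) :
    ContinuousOn (fun z => pair (f z) (g z)) s := by
  rw [continuousOn_pi]
  intro n
  by_cases h : n % 2 = 0
  · simp only [pair, h, if_true]
    exact (continuous_apply (n / 2)).comp_continuousOn hf
  · simp only [pair, h, if_false]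
    exact (continuous_apply (n / 2)).comp_continuousOn hg

theorem CWle_trans {P Q T : MV} (h1 : CWle P Q) (h2 : CWle Q T) : CWle P T := by
  classical
  obtain ⟨H1, K1, hK1c, hK1d, hH1c, hH1⟩ := h1
  obtain ⟨H2, K2, hK2c, hK2d, hH2c, hH2⟩ := h2
  refine ⟨fun z => H1 (pair (left z) (H2 (pair (K1 (left z)) (right z)))),
    fun x => K2 (K1 x), ?_, ?_, ?_, ?_⟩
  · exact hK2c.comp hK1c fun x hx => hK1d x hx
  · intro x hx
    exact hK2d _ (hK1d x hx)
  · set S : Set Baire := {z | ∃ x ∈ dom P, ∃ y ∈ T (K2 (K1 x)), z = pair x y} with hS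
    have hmemx : ∀ z ∈ S, ∃ x ∈ dom P, ∃ y ∈ T (K2 (K1 x)), left z = x ∧ right z = y := by
      rintro z ⟨x, hx, y, hy, rfl⟩
      exact ⟨x, hx, y, hy, left_pair x y, right_pair x y⟩
    have hG1 : ContinuousOn (fun z => K1 (left z)) S := by
      apply hK1c.comp continuous_left.continuousOn
      rintro z hz
      obtain ⟨x, hx, y, hy, hl, _⟩ := hmemx z hz
      rw [hl]; exact hx
    have hG2 : ContinuousOn (fun z => pair (K1 (left z)) (right z)) S :=
      continuousOn_pair_comp hG1 continuous_right.continuousOn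
    have hG3 : ContinuousOn (fun z => H2 (pair (K1 (left z)) (right z))) S := by
      apply hH2c.comp hG2
      rintro z hz
      obtain ⟨x, hx, y, hy, hl, hr⟩ := hmemx z hz
      simp only [Set.mem_setOf_eq, hl, hr]
      exact ⟨K1 x, hK1d x hx, y, hy, rfl⟩
    have hG4 : ContinuousOn
        (fun z => pair (left z) (H2 (pair (K1 (left z)) (right z)))) S :=
      continuousOn_pair_comp continuous_left.continuousOn hG3
    apply hH1c.comp hG4
    rintro z hz
    obtain ⟨x, hx, y, hy, hl, hr⟩ := hmemx z hz
    simp only [Set.mem_setOf_eq, hl, hr]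
    exact ⟨x, hx, H2 (pair (K1 x) y), hH2 (K1 x) (hK1d x hx) y hy, rfl⟩
  · intro x hx y hy
    simp only [left_pair, right_pair]
    exact hH1 x hx _ (hH2 (K1 x) (hK1d x hx) y hy)


/-- Merge the components `p₂, p₃, …` of a countable tuple into a single sequence,
producing a two-component tuple `⟨p₁, merge⟩`. -/
def merge2 (p : Baire) : Baire := fun c =>
  if (Nat.unpair c).1 = 0 then p (Nat.pair 0 (Nat.unpair c).2)
  else if (Nat.unpair c).1 = 1 then
    p (Nat.pair ((Nat.unpair (Nat.unpair c).2).1 + 1) ((Nat.unpair (Nat.unpair c).2).2))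
  else 0

theorem merge2_c1 (p : Baire) : comp (merge2 p) 1 = comp p 1 := by
  funext j
  simp [comp, cproj, merge2, Nat.unpair_pair]

theorem merge2_c2 (p : Baire) (a b : ℕ) :
    comp (merge2 p) 2 (Nat.pair a b) = comp p (a + 2) b := by
  simp [comp, cproj, merge2, Nat.unpair_pair]

theorem merge2_c2' (p : Baire) (j : ℕ) :
    comp (merge2 p) 2 j = comp p ((Nat.unpair j).1 + 2) ((Nat.unpair j).2) := by
  simp [comp, cproj, merge2, Nat.unpair_pair]

theorem merge2_c3 (p : Baire) {i : ℕ} (hi : 3 ≤ i) (j : ℕ) : comp (merge2 p) i j = 0 := by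
  have h1 : (Nat.unpair (Nat.pair (i - 1) j)).1 = i - 1 := by rw [Nat.unpair_pair]
  simp only [comp, cproj, merge2, h1]
  rw [if_neg (by omega), if_neg (by omega)]

theorem amo_merge2 {p : Baire} (hA : AMO p) : AMO (merge2 p) := by
  intro i j i' j' h1 h1' hne hne'
  have hi2 : i ≤ 2 := by
    by_contra h
    exact hne (merge2_c3 p (by omega) j)
  have hi2' : i' ≤ 2 := by
    by_contra h
    exact hne' (merge2_c3 p (by omega) j')
  interval_cases i <;> interval_cases i'
  · rw [merge2_c1] at hne hne'
    have := hA 1 j 1 j' (by omega) (by omega) hne hne'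
    exact ⟨rfl, this.2⟩
  · rw [merge2_c1] at hne
    rw [merge2_c2'] at hne'
    have := hA 1 j ((Nat.unpair j').1 + 2) ((Nat.unpair j').2) (by omega) (by omega) hne hne'
    omega
  · rw [merge2_c2'] at hne
    rw [merge2_c1] at hne'
    have := hA ((Nat.unpair j).1 + 2) ((Nat.unpair j).2) 1 j' (by omega) (by omega) hne hne'
    omega
  · rw [merge2_c2'] at hne
    rw [merge2_c2'] at hne'
    have := hA ((Nat.unpair j).1 + 2) ((Nat.unpair j).2) ((Nat.unpair j').1 + 2)
      ((Nat.unpair j').2) (by omega) (by omega) hne hne'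
    refine ⟨rfl, ?_⟩
    have hj : Nat.unpair j = Nat.unpair j' := by
      have := this
      exact Prod.ext (by omega) this.2
    have := congrArg (fun q : ℕ × ℕ => Nat.pair q.1 q.2) hj
    simpa [Nat.pair_unpair] using this

theorem continuous_merge2 : Continuous merge2 := by
  apply continuous_pi
  intro c
  by_cases h0 : (Nat.unpair c).1 = 0
  · simp only [merge2, h0, if_true]
    exact continuous_apply _
  · by_cases h1 : (Nat.unpair c).1 = 1
    · simp only [merge2, h0, h1, if_false, if_true]
      exact continuous_apply _
    · simp only [merge2, h0, h1, if_false]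
      exact continuous_const

theorem lemC {m : ℕ} (hm : 2 ≤ m) :
    CWle (SigmaLLPO 2) (coprod (SigmaLLPO m) (LLPOn 2)) := by
  classical
  set cond : Baire → Prop := fun z => ∃ j, 2 ≤ j ∧ j < m ∧ z (2 * j) ≠ 0 with hcond
  -- basic facts about cond
  have hcondelim : ∀ x, x ∈ dom (SigmaLLPO 2) → cond x →
      ∃ n', 2 ≤ n' ∧ n' < m ∧ left x = zeros1 n' := by
    intro x hx ⟨j, hj2, hjm, hjne⟩
    rcases sigma_branch hx with hl | ⟨n', hn', hl⟩
    · exact absurd (congrFun hl j) hjne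
    · have : left x j ≠ 0 := hjne
      rw [hl] at this
      simp only [zeros1] at this
      by_cases hjn : j = n'
      · exact ⟨n', by omega, by omega, hl⟩
      · simp [hjn] at this
  -- the query to LLPO₂ in the cond case is dom-correct
  have hquery : ∀ x, x ∈ dom (SigmaLLPO 2) → ∀ n', left x = zeros1 n' →
      ∃ k, 1 ≤ k ∧ k ≤ 2 ∧ comp (merge2 (right x)) k = zero ∧ comp (right x) k = zero := by
    intro x hx n' hl
    have hA : AMO (right x) := sigma_amo_fin hx hl
    by_cases h1 : comp (right x) 1 = zero
    · refine ⟨1, le_refl 1, by omega, ?_, h1⟩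
      rw [merge2_c1]; exact h1
    · have : ∃ j₀, comp (right x) 1 j₀ ≠ 0 := by
        by_contra hc
        push_neg at hc
        exact h1 (comp_eq_zero_iff.2 hc)
      obtain ⟨j₀, hj₀⟩ := this
      have hz2 : ∀ i j, 2 ≤ i → comp (right x) i j = 0 := by
        intro i j hi
        by_contra hne
        have := hA i j 1 j₀ (by omega) (by omega) hne hj₀
        omega
      refine ⟨2, by omega, le_refl 2, ?_, ?_⟩
      · apply comp_eq_zero_iff.2
        intro j
        rw [merge2_c2']
        exact hz2 _ _ (by omega)
      · exact comp_eq_zero_iff.2 fun j => hz2 2 j (by omega)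
    -- end hquery
  refine ⟨fun z => tail (right z),
    fun z => if cond z then cons 1 (merge2 (right z)) else cons 0 z, ?_, ?_, ?_, ?_⟩
  · -- continuity of K
    apply Continuous.continuousOn
    apply Continuous.if
    · have hclopen : IsClopen {z : Baire | cond z} := by
        have hset : {z : Baire | cond z} = ⋃ j ∈ Set.Ico 2 m, {z : Baire | z (2 * j) ≠ 0} := by
          ext z
          simp [hcond, Set.mem_Ico, and_assoc]
        rw [hset]
        apply (Set.finite_Ico 2 m).isClopen_biUnion
        intro j _
        exact (isClopen_discrete {k : ℕ | k ≠ 0}).preimage (continuous_apply (2 * j))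
      simp [hclopen.frontier_eq]
    · exact continuous_cons_comp 1 (continuous_merge2.comp continuous_right)
    · exact continuous_cons_comp 0 continuous_id
  · -- dom mapping
    intro x hx
    by_cases hc : cond x
    · simp only [if_pos hc]
      obtain ⟨n', hn'2, hn'm, hl⟩ := hcondelim x hx hc
      obtain ⟨k, hk1, hk2, hkz, _⟩ := hquery x hx n' hl
      have hA : AMO (right x) := sigma_amo_fin hx hl
      refine ⟨cons 1 (cons k zero), coprod_mem_one rfl ?_⟩
      rw [tail_cons]
      exact mem_LLPOn (amo_merge2 hA) hk1 hk2 hkz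
    · simp only [if_neg hc]
      obtain ⟨r, hr⟩ := hx
      refine ⟨cons 0 r, coprod_mem_zero rfl ?_⟩
      rw [tail_cons]
      rcases hr with ⟨hl, hmem⟩ | ⟨n', hn', hl, hmem⟩
      · exact Or.inl ⟨hl, hmem⟩
      · have hnm : m ≤ n' := by
          by_contra hlt
          apply hc
          refine ⟨n', hn', by omega, ?_⟩
          have : left x n' = 1 := by rw [hl]; simp [zeros1]
          simp only [left] at this
          omega
        exact Or.inr ⟨n', hnm, hl, hmem⟩
  · -- continuity of H
    exact (continuous_tail.comp continuous_right).continuousOn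
  · -- correctness
    intro x hx y hy
    simp only [right_pair]
    by_cases hc : cond x
    · simp only [if_pos hc] at hy
      obtain ⟨n', hn'2, hn'm, hl⟩ := hcondelim x hx hc
      have hA : AMO (right x) := sigma_amo_fin hx hl
      obtain ⟨s, hs, hey⟩ := mem_coprod_one rfl hy
      rw [tail_cons] at hs
      obtain ⟨_, k, hk1, hk2, hkz, hes⟩ := hs
      rw [hey, hes, tail_cons]
      refine Or.inr ⟨n', hn'2, hl, mem_LLPOn hA hk1 (by omega) ?_⟩
      -- comp (right x) k = zero
      interval_cases k
      · rw [← merge2_c1]; exact hkz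
      · apply comp_eq_zero_iff.2
        intro j
        have := congrFun hkz (Nat.pair 0 j)
        rw [merge2_c2 (right x) 0 j] at this
        exact this
    · simp only [if_neg hc] at hy
      obtain ⟨s, hs, hey⟩ := mem_coprod_zero rfl hy
      rw [tail_cons] at hs
      rw [hey, tail_cons]
      rcases hs with ⟨hl, hmem⟩ | ⟨n', hn', hl, hmem⟩
      · exact Or.inl ⟨hl, hmem⟩
      · exact Or.inr ⟨n', by omega, hl, hmem⟩


/-- Delay every component of a countable tuple by `T` steps. -/
def shiftT (T : ℕ) (p : Baire) : Baire := fun c =>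
  if T ≤ (Nat.unpair c).2 then p (Nat.pair (Nat.unpair c).1 ((Nat.unpair c).2 - T)) else 0

theorem shiftT_comp (T : ℕ) (p : Baire) (i j : ℕ) :
    comp (shiftT T p) i j = if T ≤ j then comp p i (j - T) else 0 := by
  simp [comp, cproj, shiftT, Nat.unpair_pair]

theorem shiftT_comp_zero_iff {T : ℕ} {p : Baire} {i : ℕ} :
    comp (shiftT T p) i = zero ↔ comp p i = zero := by
  constructor
  · intro h
    apply comp_eq_zero_iff.2
    intro j
    have := comp_eq_zero_iff.1 h (j + T)
    rw [shiftT_comp, if_pos (by omega)] at this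
    simpa using this
  · intro h
    apply comp_eq_zero_iff.2
    intro j
    rw [shiftT_comp]
    split
    · exact comp_eq_zero_iff.1 h _
    · rfl

theorem amo_shiftT {T : ℕ} {p : Baire} (h : AMO p) : AMO (shiftT T p) := by
  intro i j i' j' h1 h1' hne hne'
  rw [shiftT_comp] at hne hne'
  by_cases hT : T ≤ j
  · by_cases hT' : T ≤ j'
    · rw [if_pos hT] at hne
      rw [if_pos hT'] at hne'
      have := h i (j - T) i' (j' - T) h1 h1' hne hne'
      exact ⟨this.1, by omega⟩
    · rw [if_neg hT'] at hne'
      exact absurd rfl hne'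
  · rw [if_neg hT] at hne
    exact absurd rfl hne

theorem shiftT_small {T : ℕ} {p : Baire} {c : ℕ} (hc : c < T) : shiftT T p c = 0 := by
  have := Nat.unpair_right_le c
  rw [shiftT, if_neg (by omega)]

theorem continuous_shiftT (T : ℕ) : Continuous (shiftT T) := by
  apply continuous_pi
  intro c
  by_cases h : T ≤ (Nat.unpair c).2
  · simp only [shiftT, if_pos h]
    exact continuous_apply _
  · simp only [shiftT, if_neg h]
    exact continuous_const

theorem zero_dom_sigma : zero ∈ dom (SigmaLLPO 2) := by
  refine ⟨cons 1 zero, Or.inl ⟨rfl, ⟨∅, by simp, fun i j _ hne => absurd rfl hne⟩,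
    1, le_refl 1, rfl, rfl⟩⟩

theorem lemA (R : MV) (hR : CWle (SigmaLLPO 2) (coprod R (LLPOn 2))) :
    ∃ n, 2 ≤ n ∧ CWle (LLPOn n) R := by
  classical
  obtain ⟨H, K, hKc, hKd, hHc, hHcorr⟩ := hR
  have hx0 : zero ∈ dom (SigmaLLPO 2) := zero_dom_sigma
  rcases dom_coprod (hKd zero hx0) with ⟨hside, hdomR⟩ | ⟨hside, hdomL⟩
  · -- side 0 : build the reduction LLPOn n ≤ R
    obtain ⟨L, hL⟩ := loc_det (hKc zero hx0) 0
    set n := max L 2 with hn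
    set T := L with hT
    set xins : Baire → Baire := fun p => pair (zeros1 n) (shiftT T p) with hxins
    have hxprefix : ∀ p, ∀ j, j < L → xins p j = zero j := by
      intro p j hj
      show (if j % 2 = 0 then zeros1 n (j / 2) else shiftT T p (j / 2)) = 0
      split
      · have : j / 2 ≠ n := by omega
        simp [zeros1, this]
      · exact shiftT_small (by omega)
    have hdomp : ∀ p ∈ dom (LLPOn n), xins p ∈ dom (SigmaLLPO 2) := by
      rintro p ⟨r, hA, i, h1, hin, hz, _⟩
      refine ⟨cons i zero, Or.inr ⟨n, by omega, left_pair _ _, ?_⟩⟩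
      rw [right_pair]
      exact mem_LLPOn (amo_shiftT hA) h1 hin (shiftT_comp_zero_iff.2 hz)
    have hsidep : ∀ p ∈ dom (LLPOn n), K (xins p) 0 = 0 := by
      intro p hp
      rw [hL (xins p) (hdomp p hp) (hxprefix p)]
      exact hside
    have hxinscont : Continuous xins :=
      continuous_pair_comp continuous_const (continuous_shiftT T)
    refine ⟨n, by omega,
      fun z => H (pair (xins (left z)) (cons 0 (right z))),
      fun p => tail (K (xins p)), ?_, ?_, ?_, ?_⟩
    · exact continuous_tail.comp_continuousOn (hKc.comp hxinscont.continuousOn hdomp)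
    · intro p hp
      rcases dom_coprod (hKd (xins p) (hdomp p hp)) with ⟨_, hd⟩ | ⟨h1, _⟩
      · exact hd
      · rw [hsidep p hp] at h1; omega
    · apply hHc.comp (continuous_pair_comp (hxinscont.comp continuous_left)
        (continuous_cons_comp 0 continuous_right)).continuousOn
      rintro z ⟨p, hp, y, hy, rfl⟩
      simp only [Set.mem_setOf_eq, Function.comp_apply, left_pair, right_pair]
      exact ⟨xins p, hdomp p hp, cons 0 y, coprod_mem_zero (hsidep p hp) hy, rfl⟩
    · intro p hp y hy
      simp only [left_pair, right_pair]
      have hmem := hHcorr (xins p) (hdomp p hp) (cons 0 y)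
        (coprod_mem_zero (hsidep p hp) hy)
      have hlx : left (xins p) = zeros1 n := left_pair _ _
      obtain ⟨i, h1, hin, hz, heq⟩ := sigma_mem_fin hlx hmem
      rw [right_pair] at hz
      rw [heq]
      exact mem_LLPOn (dom_LLPOn_amo hp) h1 hin (shiftT_comp_zero_iff.1 hz)
  · -- side 1 : derive a contradiction
    exfalso
    set q0 : Baire := tail (K zero) with hq0
    have hAq0 : AMO q0 := dom_LLPOn_amo hdomL
    -- bound on the position of the (at most one) nonzero entry of q0
    set P0 : ℕ := if h : ∃ c d, 1 ≤ c ∧ comp q0 c d ≠ 0 then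
      Nat.pair (h.choose - 1) h.choose_spec.choose + 1 else 0 with hP0def
    have hP0 : ∀ c d, 1 ≤ c → comp q0 c d ≠ 0 → Nat.pair (c - 1) d < P0 := by
      intro c d h1 hne
      have hex : ∃ c d, 1 ≤ c ∧ comp q0 c d ≠ 0 := ⟨c, d, h1, hne⟩
      rw [hP0def, dif_pos hex]
      obtain ⟨h1', hne'⟩ := hex.choose_spec.choose_spec
      have := hAq0 c d hex.choose hex.choose_spec.choose h1 h1' hne hne'
      rw [this.1, this.2]
      omega
    set a : ℕ → ℕ := fun k => H (pair zero (cons 1 (cons k zero))) 0 with ha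
    have hvalid : ∀ k, 1 ≤ k → k ≤ 2 → comp q0 k = zero →
        cons 1 (cons k zero) ∈ coprod R (LLPOn 2) (K zero) := by
      intro k h1 h2 hz
      exact coprod_mem_one hside (mem_LLPOn hAq0 h1 h2 hz)
    have ha1 : ∀ k, 1 ≤ k → k ≤ 2 → comp q0 k = zero → 1 ≤ a k := by
      intro k h1 h2 hz
      have := hHcorr zero hx0 _ (hvalid k h1 h2 hz)
      obtain ⟨i, hi1, _, heq⟩ := sigma_mem_inf left_zero this
      have : a k = i := by
        show H (pair zero (cons 1 (cons k zero))) 0 = i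
        rw [heq]
        rfl
      omega
    -- locality of H at the two base oracle-answer points
    set SH : Set Baire :=
      {z | ∃ x ∈ dom (SigmaLLPO 2), ∃ y ∈ coprod R (LLPOn 2) (K x), z = pair x y} with hSH
    set lf : ℕ → ℕ := fun k =>
      if h : cons 1 (cons k zero) ∈ coprod R (LLPOn 2) (K zero) then
        (loc_det (hHc (pair zero (cons 1 (cons k zero)))
          ⟨zero, hx0, cons 1 (cons k zero), h, rfl⟩) 0).choose
      else 0 with hlf
    have hlfspec : ∀ k (h : cons 1 (cons k zero) ∈ coprod R (LLPOn 2) (K zero)),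
        ∀ w ∈ SH, (∀ j, j < lf k → w j = pair zero (cons 1 (cons k zero)) j) →
          H w 0 = H (pair zero (cons 1 (cons k zero))) 0 := by
      intro k h
      rw [hlf]
      simp only [dif_pos h]
      exact (loc_det (hHc (pair zero (cons 1 (cons k zero)))
          ⟨zero, hx0, cons 1 (cons k zero), h, rfl⟩) 0).choose_spec
    obtain ⟨LK, hLK⟩ := loc_det_prefix (hKc zero hx0) (P0 + 2)
    set N := LK + lf 1 + lf 2 + 1 with hN
    -- the perturbed input
    set p1 : Baire := fun c =>
      if (comp q0 1 = zero ∧ c = Nat.pair (a 1 - 1) N) ∨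
         (comp q0 2 = zero ∧ c = Nat.pair (a 2 - 1) N) then 1 else 0 with hp1
    set x1 : Baire := pair zero p1 with hx1
    have hp1small : ∀ c, c < N → p1 c = 0 := by
      intro c hc
      have hb1 := Nat.right_le_pair (a 1 - 1) N
      have hb2 := Nat.right_le_pair (a 2 - 1) N
      rw [hp1]
      apply if_neg
      rintro (⟨_, hcc⟩ | ⟨_, hcc⟩) <;> omega
    have hp1c : ∀ k, 1 ≤ k → k ≤ 2 → comp q0 k = zero → comp p1 (a k) N = 1 := by
      intro k h1 h2 hz
      show p1 (Nat.pair (a k - 1) N) = 1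
      rw [hp1]
      apply if_pos
      interval_cases k
      · exact Or.inl ⟨hz, rfl⟩
      · exact Or.inr ⟨hz, rfl⟩
    have hp1nz : ∀ c d, 1 ≤ c → comp p1 c d ≠ 0 →
        ((c = a 1 ∧ comp q0 1 = zero) ∨ (c = a 2 ∧ comp q0 2 = zero)) ∧ d = N := by
      intro c d h1 hne
      have : p1 (Nat.pair (c - 1) d) ≠ 0 := hne
      rw [hp1] at this
      by_cases hcond : (comp q0 1 = zero ∧ Nat.pair (c - 1) d = Nat.pair (a 1 - 1) N) ∨
         (comp q0 2 = zero ∧ Nat.pair (c - 1) d = Nat.pair (a 2 - 1) N)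
      · rcases hcond with ⟨hz, hcc⟩ | ⟨hz, hcc⟩
        · rw [Nat.pair_eq_pair] at hcc
          have := ha1 1 (by omega) (by omega) hz
          exact ⟨Or.inl ⟨by omega, hz⟩, hcc.2⟩
        · rw [Nat.pair_eq_pair] at hcc
          have := ha1 2 (by omega) (by omega) hz
          exact ⟨Or.inr ⟨by omega, hz⟩, hcc.2⟩
      · simp only [if_neg hcond] at this
        exact absurd rfl this
    have hx1dom : x1 ∈ dom (SigmaLLPO 2) := by
      refine ⟨cons (a 1 + a 2 + 1) zero, Or.inl ⟨left_pair _ _, ?_⟩⟩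
      rw [right_pair]
      refine ⟨⟨{(a 1, N), (a 2, N)}, le_trans (Finset.card_insert_le _ _) (by simp), ?_⟩,
        a 1 + a 2 + 1, by omega, ?_, rfl⟩
      · intro c d h1 hne
        obtain ⟨hc, hd⟩ := hp1nz c d h1 hne
        rcases hc with ⟨hc, _⟩ | ⟨hc, _⟩ <;> simp [hc, hd]
      · apply comp_eq_zero_iff.2
        intro j
        by_contra hne
        obtain ⟨hc, _⟩ := hp1nz _ j (by omega) hne
        rcases hc with ⟨hc, _⟩ | ⟨hc, _⟩ <;> omega
    have hx1agree : ∀ j, j < N → x1 j = zero j := by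
      intro j hj
      show (if j % 2 = 0 then zero (j / 2) else p1 (j / 2)) = 0
      split
      · rfl
      · exact hp1small _ (by omega)
    have hKagree : ∀ j, j < P0 + 2 → K x1 j = K zero j :=
      hLK x1 hx1dom fun j hj => hx1agree j (by omega)
    have hside1 : K x1 0 = 1 := by rw [hKagree 0 (by omega)]; exact hside
    set q1 : Baire := tail (K x1) with hq1
    have hq1dom : q1 ∈ dom (LLPOn 2) := by
      rcases dom_coprod (hKd x1 hx1dom) with ⟨h0, _⟩ | ⟨_, hd⟩
      · omega
      · exact hd
    have hq1agree : ∀ r, r < P0 → q1 r = q0 r := by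
      intro r hr
      show K x1 (r + 1) = K zero (r + 1)
      exact hKagree (r + 1) (by omega)
    obtain ⟨r1, hAq1, k1, hk11, hk12, hk1z, _⟩ := hq1dom
    have hAq1' : AMO q1 := hAq1
    have hk1q0 : comp q0 k1 = zero := by
      by_contra hne
      have : ∃ d, comp q0 k1 d ≠ 0 := by
        by_contra hcc
        push_neg at hcc
        exact hne (comp_eq_zero_iff.2 hcc)
      obtain ⟨d, hd⟩ := this
      have hpos := hP0 k1 d hk11 hd
      have : comp q1 k1 d = comp q0 k1 d := hq1agree (Nat.pair (k1 - 1) d) hpos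
      rw [comp_eq_zero_iff.1 hk1z d] at this
      exact hd this.symm
    set y : Baire := cons 1 (cons k1 zero) with hy
    have hyK0 : y ∈ coprod R (LLPOn 2) (K zero) := hvalid k1 hk11 hk12 hk1q0
    have hyK1 : y ∈ coprod R (LLPOn 2) (K x1) :=
      coprod_mem_one hside1 (mem_LLPOn hAq1' hk11 hk12 hk1z)
    have hx1SH : pair x1 y ∈ SH := ⟨x1, hx1dom, y, hyK1, rfl⟩
    have hagreeH : ∀ j, j < lf k1 → pair x1 y j = pair zero y j := by
      intro j hj
      have hjN : j < N := by
        rw [hN]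
        interval_cases k1 <;> omega
      show (if j % 2 = 0 then x1 (j / 2) else y (j / 2)) =
        (if j % 2 = 0 then zero (j / 2) else y (j / 2))
      split
      · exact hx1agree (j / 2) (by omega)
      · rfl
    have hH0 : H (pair x1 y) 0 = a k1 := hlfspec k1 hyK0 (pair x1 y) hx1SH hagreeH
    have hmem1 := hHcorr x1 hx1dom y hyK1
    obtain ⟨i, hi1, hiz, heqi⟩ := sigma_mem_inf (left_pair _ _) hmem1
    have hieq : i = a k1 := by
      rw [← hH0, heqi]; rfl
    rw [right_pair] at hiz
    have := comp_eq_zero_iff.1 hiz N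
    rw [hieq] at this
    rw [hp1c k1 hk11 hk12 hk1q0] at this
    omega


theorem lemB {n : ℕ} (hn : 2 ≤ n) : ¬ CWle (LLPOn n) (SigmaLLPO (n + 1)) := by
  classical
  rintro ⟨H, K, hKc, hKd, hHc, hHcorr⟩
  have hz0 : zero ∈ dom (LLPOn n) := dom_LLPOn AMO_zero (le_refl 1) (by omega) (comp_zero 1)
  have hudom : K zero ∈ dom (SigmaLLPO (n + 1)) := hKd zero hz0
  -- perturbed inputs
  set zi : ℕ → ℕ → Baire := fun i N => Function.update zero (Nat.pair (i - 1) N) 1 with hzi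
  have hzival : ∀ i N, comp (zi i N) i N = 1 := by
    intro i N
    show Function.update zero (Nat.pair (i - 1) N) 1 (Nat.pair (i - 1) N) = 1
    simp
  have hzinz : ∀ i N c d, 1 ≤ i → 1 ≤ c → comp (zi i N) c d ≠ 0 → c = i ∧ d = N := by
    intro i N c d hi hc hne
    have : Function.update zero (Nat.pair (i - 1) N) 1 (Nat.pair (c - 1) d) ≠ 0 := hne
    by_cases he : Nat.pair (c - 1) d = Nat.pair (i - 1) N
    · rw [Nat.pair_eq_pair] at he
      omega
    · rw [Function.update_of_ne he] at this
      exact absurd rfl this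
  have hzismall : ∀ i N c, 1 ≤ i → c < N → zi i N c = 0 := by
    intro i N c hi hc
    have := Nat.right_le_pair (i - 1) N
    have hne : c ≠ Nat.pair (i - 1) N := by omega
    show Function.update zero (Nat.pair (i - 1) N) 1 c = 0
    rw [Function.update_of_ne hne]
    rfl
  have hzidom : ∀ i N, 1 ≤ i → zi i N ∈ dom (LLPOn n) := by
    intro i N hi
    have hA : AMO (zi i N) := by
      intro c d c' d' hc hc' hne hne'
      have h1 := hzinz i N c d hi hc hne
      have h2 := hzinz i N c' d' hi hc' hne'
      omega
    refine dom_LLPOn hA (i := if i = 1 then 2 else 1) (by split <;> omega)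
      (by split <;> omega) ?_
    apply comp_eq_zero_iff.2
    intro j
    by_contra hne
    have := hzinz i N _ j hi (by split <;> omega) hne
    split at this <;> omega
  -- base answers and locality moduli
  set a : ℕ → ℕ := fun k => H (pair zero (cons k zero)) 0 with ha
  have hamem : ∀ k, cons k zero ∈ SigmaLLPO (n + 1) (K zero) → 1 ≤ a k ∧ a k ≤ n := by
    intro k hk
    have := hHcorr zero hz0 _ hk
    obtain ⟨_, i, h1, hin, _, heq⟩ := this
    have : a k = i := by
      show H (pair zero (cons k zero)) 0 = i
      rw [heq]; rfl
    omega
  set SH : Set Baire :=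
    {z | ∃ x ∈ dom (LLPOn n), ∃ y ∈ SigmaLLPO (n + 1) (K x), z = pair x y} with hSH
  set lf : ℕ → ℕ := fun k =>
    if h : cons k zero ∈ SigmaLLPO (n + 1) (K zero) then
      (loc_det (hHc (pair zero (cons k zero)) ⟨zero, hz0, cons k zero, h, rfl⟩) 0).choose
    else 0 with hlf
  have hlfspec : ∀ k (h : cons k zero ∈ SigmaLLPO (n + 1) (K zero)),
      ∀ w ∈ SH, (∀ j, j < lf k → w j = pair zero (cons k zero) j) →
        H w 0 = H (pair zero (cons k zero)) 0 := by
    intro k h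
    rw [hlf]
    simp only [dif_pos h]
    exact (loc_det (hHc (pair zero (cons k zero)) ⟨zero, hz0, cons k zero, h, rfl⟩)
      0).choose_spec
  -- the final contradiction, given a suitable N and oracle answer k
  have final : ∀ N k, lf k ≤ N → cons k zero ∈ SigmaLLPO (n + 1) (K zero) →
      (∀ i, 1 ≤ i → i ≤ n → cons k zero ∈ SigmaLLPO (n + 1) (K (zi i N))) → False := by
    intro N k hNk hk hki
    obtain ⟨hak1, hakn⟩ := hamem k hk
    have hdomak := hzidom (a k) N (by omega)
    have hSHmem : pair (zi (a k) N) (cons k zero) ∈ SH :=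
      ⟨zi (a k) N, hdomak, cons k zero, hki (a k) hak1 hakn, rfl⟩
    have hagree : ∀ j, j < lf k →
        pair (zi (a k) N) (cons k zero) j = pair zero (cons k zero) j := by
      intro j hj
      show (if j % 2 = 0 then zi (a k) N (j / 2) else cons k zero (j / 2)) =
        (if j % 2 = 0 then zero (j / 2) else cons k zero (j / 2))
      split
      · rw [hzismall (a k) N (j / 2) (by omega) (by omega)]
        rfl
      · rfl
    have hH0 : H (pair (zi (a k) N) (cons k zero)) 0 = a k :=
      hlfspec k hk _ hSHmem hagree
    have hmem := hHcorr (zi (a k) N) hdomak (cons k zero) (hki (a k) hak1 hakn)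
    obtain ⟨_, i', h1', _, hz', heq'⟩ := hmem
    have hieq : i' = a k := by
      rw [← hH0, heq']; rfl
    have := comp_eq_zero_iff.1 hz' N
    rw [hieq] at this
    rw [hzival (a k) N] at this
    omega
  -- case analysis on the branch of K zero
  rcases sigma_branch hudom with hul | ⟨m, hm, hul⟩
  · -- infinite branch
    obtain ⟨s0, hs0card, hs0cov⟩ := sigma_cover hudom
    set M := 2 * n + 3 with hM
    obtain ⟨LK, hLK⟩ := loc_det_prefix (hKc zero hz0) (2 * M + 2)
    set N := LK + (Finset.range (M + 1)).sup lf + 1 with hN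
    have hKag : ∀ i, 1 ≤ i → ∀ j, j < 2 * M + 2 → K (zi i N) j = K zero j := by
      intro i hi
      apply hLK (zi i N) (hzidom i N hi)
      intro j hj
      rw [hzismall i N j hi (by omega)]
      rfl
    -- covers of the perturbed queries
    set sf : ℕ → Finset (ℕ × ℕ) := fun i =>
      if h : K (zi i N) ∈ dom (SigmaLLPO (n + 1)) then (sigma_cover h).choose else ∅
      with hsf
    have hsfspec : ∀ i, 1 ≤ i → i ≤ n → (sf i).card ≤ 2 ∧
        ∀ c d, 1 ≤ c → comp (right (K (zi i N))) c d ≠ 0 → (c, d) ∈ sf i := by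
      intro i h1 h2
      have hd : K (zi i N) ∈ dom (SigmaLLPO (n + 1)) := hKd _ (hzidom i N h1)
      rw [hsf]
      simp only [dif_pos hd]
      exact (sigma_cover hd).choose_spec
    set bad : Finset ℕ := s0.image Prod.fst ∪
      (Finset.Icc 1 n).biUnion (fun i => (sf i).image Prod.fst) with hbad
    have hbadcard : bad.card < (Finset.Icc 1 M).card := by
      have h1 : (s0.image Prod.fst).card ≤ 2 :=
        le_trans (Finset.card_image_le) hs0card
      have h2 : ((Finset.Icc 1 n).biUnion (fun i => (sf i).image Prod.fst)).card ≤ 2 * n := by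
        apply le_trans (Finset.card_biUnion_le)
        apply le_trans (Finset.sum_le_sum (f := fun i => ((sf i).image Prod.fst).card)
          (g := fun _ => 2) ?_)
        · rw [Finset.sum_const, Nat.card_Icc, smul_eq_mul]
          omega
        · intro i hi
          rw [Finset.mem_Icc] at hi
          exact le_trans (Finset.card_image_le) (hsfspec i hi.1 hi.2).1
      have := Finset.card_union_le (s0.image Prod.fst)
        ((Finset.Icc 1 n).biUnion (fun i => (sf i).image Prod.fst))
      rw [hbad, Nat.card_Icc]
      omega
    obtain ⟨k, hkIcc, hkbad⟩ := finset_exists_notMem hbadcard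
    rw [Finset.mem_Icc] at hkIcc
    have hkq0 : comp (right (K zero)) k = zero := by
      apply comp_eq_zero_iff.2
      intro d
      by_contra hne
      exact hkbad (Finset.mem_union_left _
        (Finset.mem_image.2 ⟨(k, d), hs0cov k d (by omega) hne, rfl⟩))
    have hku : cons k zero ∈ SigmaLLPO (n + 1) (K zero) :=
      sigma_answer_inf hudom hul (by omega) hkq0
    apply final N k ?_ hku
    · -- validity at the perturbed inputs
      intro i h1 h2
      have hdomi : K (zi i N) ∈ dom (SigmaLLPO (n + 1)) := hKd _ (hzidom i N h1)
      have hkqi : comp (right (K (zi i N))) k = zero := by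
        apply comp_eq_zero_iff.2
        intro d
        by_contra hne
        apply hkbad
        apply Finset.mem_union_right
        apply Finset.mem_biUnion.2
        exact ⟨i, Finset.mem_Icc.2 ⟨h1, h2⟩,
          Finset.mem_image.2 ⟨(k, d), (hsfspec i h1 h2).2 k d (by omega) hne, rfl⟩⟩
      rcases sigma_branch hdomi with hli | ⟨mi, hmi, hli⟩
      · exact sigma_answer_inf hdomi hli (by omega) hkqi
      · have hmiM : M < mi := by
          by_contra hc
          have h2m : K (zi i N) (2 * mi) = K zero (2 * mi) := hKag i h1 (2 * mi) (by omega)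
          have hl1 : left (K (zi i N)) mi = 1 := by rw [hli]; simp [zeros1]
          have hl0 : left (K zero) mi = 0 := by rw [hul]; rfl
          simp only [left] at hl1 hl0
          omega
        exact sigma_answer_fin hdomi hli (by omega) (by omega) hkqi
    · -- lf k ≤ N
      have : lf k ≤ (Finset.range (M + 1)).sup lf :=
        Finset.le_sup (Finset.mem_range.2 (by omega))
      omega
  · -- finite branch m ≥ n+1
    set q0 : Baire := right (K zero) with hq0
    have hAq0 : AMO q0 := sigma_amo_fin hudom hul
    set P0 : ℕ := if h : ∃ c d, 1 ≤ c ∧ comp q0 c d ≠ 0 then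
      Nat.pair (h.choose - 1) h.choose_spec.choose + 1 else 0 with hP0def
    have hP0 : ∀ c d, 1 ≤ c → comp q0 c d ≠ 0 → Nat.pair (c - 1) d < P0 := by
      intro c d h1 hne
      have hex : ∃ c d, 1 ≤ c ∧ comp q0 c d ≠ 0 := ⟨c, d, h1, hne⟩
      rw [hP0def, dif_pos hex]
      obtain ⟨h1', hne'⟩ := hex.choose_spec.choose_spec
      have := hAq0 c d hex.choose hex.choose_spec.choose h1 h1' hne hne'
      rw [this.1, this.2]
      omega
    obtain ⟨LK, hLK⟩ := loc_det_prefix (hKc zero hz0) (2 * (m + P0) + 3)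
    set N := LK + (Finset.range (m + 1)).sup lf + 1 with hN
    have hKag : ∀ i, 1 ≤ i → ∀ j, j < 2 * (m + P0) + 3 → K (zi i N) j = K zero j := by
      intro i hi
      apply hLK (zi i N) (hzidom i N hi)
      intro j hj
      rw [hzismall i N j hi (by omega)]
      rfl
    have hbranch : ∀ i, 1 ≤ i → i ≤ n → left (K (zi i N)) = zeros1 m := by
      intro i h1 h2
      have hdomi : K (zi i N) ∈ dom (SigmaLLPO (n + 1)) := hKd _ (hzidom i N h1)
      have h2m : K (zi i N) (2 * m) = K zero (2 * m) := hKag i h1 (2 * m) (by omega)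
      have hlm : left (K (zi i N)) m = 1 := by
        show K (zi i N) (2 * m) = 1
        rw [h2m]
        have : left (K zero) m = 1 := by rw [hul]; simp [zeros1]
        exact this
      rcases sigma_branch hdomi with hli | ⟨mi, hmi, hli⟩
      · rw [hli] at hlm
        exact absurd hlm (by simp [zero])
      · rw [hli] at hlm ⊢
        simp only [zeros1] at hlm
        by_cases hmm : m = mi
        · rw [hmm]
        · simp [hmm] at hlm
    have hqagree : ∀ i, 1 ≤ i → ∀ r, r < P0 →
        right (K (zi i N)) r = q0 r := by
      intro i h1 r hr
      show K (zi i N) (2 * r + 1) = K zero (2 * r + 1)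
      exact hKag i h1 (2 * r + 1) (by omega)
    have hlfN : ∀ k, k ≤ m → lf k ≤ N := by
      intro k hk
      have : lf k ≤ (Finset.range (m + 1)).sup lf :=
        Finset.le_sup (Finset.mem_range.2 (by omega))
      omega
    by_cases hq0z : ∀ c d, 1 ≤ c → comp q0 c d = 0
    · -- q0 entirely zero : avoid the n witnesses of the perturbed queries
      set jf : ℕ → ℕ := fun i =>
        if h : ∃ c d, 1 ≤ c ∧ comp (right (K (zi i N))) c d ≠ 0 then h.choose else 0
        with hjf
      set bad : Finset ℕ := (Finset.Icc 1 n).image jf with hbad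
      have hbadcard : bad.card < (Finset.Icc 1 m).card := by
        have := Finset.card_image_le (s := Finset.Icc 1 n) (f := jf)
        rw [Nat.card_Icc] at this ⊢
        rw [hbad]
        omega
      obtain ⟨k, hkIcc, hkbad⟩ := finset_exists_notMem hbadcard
      rw [Finset.mem_Icc] at hkIcc
      have hkq0 : comp q0 k = zero := comp_eq_zero_iff.2 fun d => hq0z k d (by omega)
      have hku : cons k zero ∈ SigmaLLPO (n + 1) (K zero) :=
        sigma_answer_fin hudom hul (by omega) (by omega) hkq0
      apply final N k (hlfN k (by omega)) hku
      intro i h1 h2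
      have hdomi : K (zi i N) ∈ dom (SigmaLLPO (n + 1)) := hKd _ (hzidom i N h1)
      have hAi : AMO (right (K (zi i N))) := sigma_amo_fin hdomi (hbranch i h1 h2)
      have hkqi : comp (right (K (zi i N))) k = zero := by
        apply comp_eq_zero_iff.2
        intro d
        by_contra hne
        have hex : ∃ c d, 1 ≤ c ∧ comp (right (K (zi i N))) c d ≠ 0 := ⟨k, d, by omega, hne⟩
        have hjfi : jf i = hex.choose := by rw [hjf]; simp only [dif_pos hex]
        obtain ⟨d', h1', hne'⟩ := hex.choose_spec
        have := hAi k d hex.choose d' (by omega) h1' hne hne'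
        apply hkbad
        rw [hbad]
        apply Finset.mem_image.2
        exact ⟨i, Finset.mem_Icc.2 ⟨h1, h2⟩, by omega⟩
      exact sigma_answer_fin hdomi (hbranch i h1 h2) (by omega) (by omega) hkqi
    · -- q0 has a (unique) nonzero entry in component c0 : pick k ≠ c0
      push_neg at hq0z
      obtain ⟨c0, d0, hc01, hc0ne⟩ := hq0z
      set k := if c0 = 1 then 2 else 1 with hk
      have hk1 : 1 ≤ k := by rw [hk]; split <;> omega
      have hkm : k ≤ m := by rw [hk]; split <;> omega
      have hkc0 : k ≠ c0 := by rw [hk]; split <;> omega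
      have hkq0 : comp q0 k = zero := by
        apply comp_eq_zero_iff.2
        intro d
        by_contra hne
        have := hAq0 k d c0 d0 (by omega) hc01 hne hc0ne
        omega
      have hku : cons k zero ∈ SigmaLLPO (n + 1) (K zero) :=
        sigma_answer_fin hudom hul hk1 hkm hkq0
      apply final N k (hlfN k hkm) hku
      intro i h1 h2
      have hdomi : K (zi i N) ∈ dom (SigmaLLPO (n + 1)) := hKd _ (hzidom i N h1)
      have hAi : AMO (right (K (zi i N))) := sigma_amo_fin hdomi (hbranch i h1 h2)
      have hqi0 : comp (right (K (zi i N))) c0 d0 ≠ 0 := by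
        have : right (K (zi i N)) (Nat.pair (c0 - 1) d0) = q0 (Nat.pair (c0 - 1) d0) :=
          hqagree i h1 _ (hP0 c0 d0 hc01 hc0ne)
        show right (K (zi i N)) (Nat.pair (c0 - 1) d0) ≠ 0
        rw [this]
        exact hc0ne
      have hkqi : comp (right (K (zi i N))) k = zero := by
        apply comp_eq_zero_iff.2
        intro d
        by_contra hne
        have := hAi k d c0 d0 (by omega) hc01 hne hqi0
        omega
      exact sigma_answer_fin hdomi (hbranch i h1 h2) hk1 hkm hkqi

end Weihrauch



open Weihrauch

/-- The set {R | Σ_2^∞LLPO ≤ᶜ_W R ∐ LLPO_{2,1}} has no ≤ᶜ_W-least element: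
the continuous Weihrauch lattice is not a Brouwer algebra. -/
theorem no_least_element_brouwer (R : MV)
    (hR : CWle (SigmaLLPO 2) (coprod R (LLPOn 2))) :
    ∃ S : MV, CWle (SigmaLLPO 2) (coprod S (LLPOn 2)) ∧ ¬ CWle R S := by
  obtain ⟨n, hn2, hLR⟩ := lemA R hR
  exact ⟨SigmaLLPO (n + 1), lemC (by omega), fun h => lemB hn2 (CWle_trans hLR h)⟩
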